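/- Let φ ∈ C^{1,γ}(ℝ), 0 < γ < 1, with φ'(s) > 0 for all s, and let u : Q → ℝ be bounded with u ∈ C^α_σ(Q), i.e., |u(Y₁) - u(Y₂)| ≤ K|Y₁ - Y₂|_σ^α for all Y₁, Y₂. Fix Y₀ ∈ Q and define f(Y) = u(Y) - φ(u(Y))/φ'(u(Y₀)). Then there is a constant c > 0 (depending on K, the C^{1,γ} seminorm of φ', and a positive lower bound for φ' on the range of u) such that for all Y₁, Y₂ ∈ Q: |f(Y₁) - f(Y₂)| ≤ c max{|Y₁ - Y₀|_σ^{αγ}, |Y₂ - Y₀|_σ^{αγ}} |Y₁ - Y₂|_σ^α. -/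

import Mathlib

open MeasureTheory

/-- The σ-parabolic gauge `|Y|_σ = (|x|² + |t|^{2/σ})^{1/2}` for `Y = (x,t) ∈ ℝ^N × ℝ`. -/
noncomputable def pGauge (σ : ℝ) {N : ℕ} (Y : EuclideanSpace ℝ (Fin N) × ℝ) : ℝ :=
  Real.sqrt (‖Y.1‖ ^ 2 + |Y.2| ^ (2 / σ))

lemma pGauge_nonneg (σ : ℝ) {N : ℕ} (Y : EuclideanSpace ℝ (Fin N) × ℝ) :
    0 ≤ pGauge σ Y :=
  Real.sqrt_nonneg _

/-!
By the mean value theorem, `f(Y₁) - f(Y₂) = (1 - φ'(θ)/φ'(u(Y₀))) (u(Y₁) - u(Y₂))` with `θ`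
between `u(Y₁)` and `u(Y₂)`. The Hölder continuity of `φ'` bounds the first factor by
`H |θ - u(Y₀)|^γ / m`, and `|θ - u(Y₀)| ≤ max |u(Yᵢ) - u(Y₀)| ≤ K max |Yᵢ - Y₀|_σ^α`;
the second factor is at most `K |Y₁ - Y₂|_σ^α`.
-/

lemma abs_sub_le_max_of_mem_uIcc {x y θ : ℝ} (a : ℝ) (hθ : θ ∈ Set.uIcc x y) :
    |θ - a| ≤ max |x - a| |y - a| := by
  rcases Set.mem_uIcc.1 hθ with ⟨hx, hy⟩ | ⟨hy, hx⟩
  · exact abs_le_max_abs_abs (by linarith) (by linarith)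
  · rw [max_comm]
    exact abs_le_max_abs_abs (by linarith) (by linarith)

lemma rpow_le_of_le_mul_rpow {s K p α γ : ℝ} (hs : 0 ≤ s) (hK : 0 ≤ K) (hp : 0 ≤ p)
    (hγ : 0 ≤ γ) (h : s ≤ K * p ^ α) : s ^ γ ≤ K ^ γ * p ^ (α * γ) :=
  calc s ^ γ ≤ (K * p ^ α) ^ γ := Real.rpow_le_rpow hs h hγ
    _ = K ^ γ * p ^ (α * γ) := by
      rw [Real.mul_rpow hK (Real.rpow_nonneg hp _), ← Real.rpow_mul hp]

section HolderDerivative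

variable {φ : ℝ → ℝ} {H γ a : ℝ}

lemma abs_one_sub_deriv_div_le (hHol : ∀ s t : ℝ, |deriv φ s - deriv φ t| ≤ H * |s - t| ^ γ)
    (ha : 0 < deriv φ a) (θ : ℝ) :
    |1 - deriv φ θ / deriv φ a| ≤ H / deriv φ a * |θ - a| ^ γ := by
  have hsplit : 1 - deriv φ θ / deriv φ a = (deriv φ a - deriv φ θ) / deriv φ a := by
    field_simp
  rw [hsplit, abs_div, abs_of_pos ha, div_mul_eq_mul_div, abs_sub_comm θ a]
  gcongr
  exact hHol a θ

theorem abs_sub_div_deriv_sub_le (hφ : Differentiable ℝ φ) (hH : 0 ≤ H) (hγ : 0 ≤ γ)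
    (hHol : ∀ s t : ℝ, |deriv φ s - deriv φ t| ≤ H * |s - t| ^ γ)
    (ha : 0 < deriv φ a) (x y : ℝ) :
    |(x - φ x / deriv φ a) - (y - φ y / deriv φ a)|
      ≤ H / deriv φ a * max |x - a| |y - a| ^ γ * |x - y| := by
  set g : ℝ → ℝ := fun s ↦ s - φ s / deriv φ a
  have hg (θ : ℝ) : HasDerivAt g (1 - deriv φ θ / deriv φ a) θ :=
    (hasDerivAt_id θ).sub ((hφ θ).hasDerivAt.div_const _)
  have hbound : ∀ θ ∈ Set.uIcc y x, ‖deriv g θ‖ ≤ H / deriv φ a * max |x - a| |y - a| ^ γ := by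
    intro θ hθ
    rw [(hg θ).deriv, Real.norm_eq_abs]
    refine (abs_one_sub_deriv_div_le hHol ha θ).trans ?_
    have hθa : |θ - a| ≤ max |x - a| |y - a| :=
      abs_sub_le_max_of_mem_uIcc a (Set.uIcc_comm y x ▸ hθ)
    gcongr
  exact Convex.norm_image_sub_le_of_norm_deriv_le (fun θ _ ↦ (hg θ).differentiableAt) hbound
    (convex_uIcc y x) Set.left_mem_uIcc Set.right_mem_uIcc

end HolderDerivative

theorem improved_holder_nonlinear_general (N : ℕ) (σ α γ K M m H : ℝ)
    (hγ : 0 < γ)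
    (hK : 0 ≤ K) (hH : 0 ≤ H)
    (φ : ℝ → ℝ) (hφ : Differentiable ℝ φ)
    (hHol : ∀ a b : ℝ, |deriv φ a - deriv φ b| ≤ H * |a - b| ^ γ)
    (u : EuclideanSpace ℝ (Fin N) × ℝ → ℝ)
    (hbd : ∀ Y : EuclideanSpace ℝ (Fin N) × ℝ, 0 < Y.2 → |u Y| ≤ M)
    (hm : 0 < m) (hlow : ∀ s : ℝ, |s| ≤ M → m ≤ deriv φ s)
    (huα : ∀ Y₁ Y₂ : EuclideanSpace ℝ (Fin N) × ℝ, 0 < Y₁.2 → 0 < Y₂.2 →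
      |u Y₁ - u Y₂| ≤ K * pGauge σ (Y₁ - Y₂) ^ α)
    (Y₀ : EuclideanSpace ℝ (Fin N) × ℝ) (hY₀ : 0 < Y₀.2) :
    ∃ c > 0, ∀ Y₁ Y₂ : EuclideanSpace ℝ (Fin N) × ℝ, 0 < Y₁.2 → 0 < Y₂.2 →
      |(u Y₁ - φ (u Y₁) / deriv φ (u Y₀)) - (u Y₂ - φ (u Y₂) / deriv φ (u Y₀))|
        ≤ c * max (pGauge σ (Y₁ - Y₀) ^ (α * γ)) (pGauge σ (Y₂ - Y₀) ^ (α * γ)) *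
            pGauge σ (Y₁ - Y₂) ^ α := by
  have hmD : m ≤ deriv φ (u Y₀) := hlow _ (hbd Y₀ hY₀)
  refine ⟨H * K * K ^ γ / m + 1, by positivity, fun Y₁ Y₂ h₁ h₂ ↦ ?_⟩
  set Mx := max (pGauge σ (Y₁ - Y₀) ^ (α * γ)) (pGauge σ (Y₂ - Y₀) ^ (α * γ))
  have hMx : 0 ≤ Mx := le_max_of_le_left (Real.rpow_nonneg (pGauge_nonneg σ _) _)
  have hosc : max |u Y₁ - u Y₀| |u Y₂ - u Y₀| ^ γ ≤ K ^ γ * Mx := by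
    rw [Real.rpow_max (abs_nonneg _) (abs_nonneg _) hγ.le,
      mul_max_of_nonneg _ _ (Real.rpow_nonneg hK _)]
    exact max_le_max
      (rpow_le_of_le_mul_rpow (abs_nonneg _) hK (pGauge_nonneg σ _) hγ.le (huα Y₁ Y₀ h₁ hY₀))
      (rpow_le_of_le_mul_rpow (abs_nonneg _) hK (pGauge_nonneg σ _) hγ.le (huα Y₂ Y₀ h₂ hY₀))
  calc _ ≤ H / deriv φ (u Y₀) * max |u Y₁ - u Y₀| |u Y₂ - u Y₀| ^ γ * |u Y₁ - u Y₂| :=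
        abs_sub_div_deriv_sub_le hφ hH hγ.le hHol (hm.trans_le hmD) _ _
    _ ≤ H / m * (K ^ γ * Mx) * (K * pGauge σ (Y₁ - Y₂) ^ α) := by
        gcongr
        exact huα Y₁ Y₂ h₁ h₂
    _ = H * K * K ^ γ / m * Mx * pGauge σ (Y₁ - Y₂) ^ α := by ring
    _ ≤ _ := by
        have hq : 0 ≤ pGauge σ (Y₁ - Y₂) ^ α := Real.rpow_nonneg (pGauge_nonneg σ _) α
        gcongr
        linarith

/-- Improved local Hölder estimate for `f(Y) = u(Y) - φ(u(Y))/φ'(u(Y₀))` when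
`φ ∈ C^{1,γ}` with `φ' > 0` and `u` is bounded and `C^α_σ` on `Q = ℝ^N × (0,∞)`. -/
theorem improved_holder_nonlinear (N : ℕ) (hN : 1 ≤ N) (σ α γ K M m H : ℝ)
    (hσ : 0 < σ) (hσ2 : σ < 2) (hγ : 0 < γ) (hγ1 : γ < 1) (hα : 0 < α)
    (hK : 0 ≤ K) (hH : 0 ≤ H)
    (φ : ℝ → ℝ) (hφ : Differentiable ℝ φ) (hφ' : ∀ s : ℝ, 0 < deriv φ s)
    (hHol : ∀ a b : ℝ, |deriv φ a - deriv φ b| ≤ H * |a - b| ^ γ)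
    (u : EuclideanSpace ℝ (Fin N) × ℝ → ℝ)
    (hbd : ∀ Y : EuclideanSpace ℝ (Fin N) × ℝ, 0 < Y.2 → |u Y| ≤ M)
    (hm : 0 < m) (hlow : ∀ s : ℝ, |s| ≤ M → m ≤ deriv φ s)
    (huα : ∀ Y₁ Y₂ : EuclideanSpace ℝ (Fin N) × ℝ, 0 < Y₁.2 → 0 < Y₂.2 →
      |u Y₁ - u Y₂| ≤ K * pGauge σ (Y₁ - Y₂) ^ α)
    (Y₀ : EuclideanSpace ℝ (Fin N) × ℝ) (hY₀ : 0 < Y₀.2) :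
    ∃ c > 0, ∀ Y₁ Y₂ : EuclideanSpace ℝ (Fin N) × ℝ, 0 < Y₁.2 → 0 < Y₂.2 →
      |(u Y₁ - φ (u Y₁) / deriv φ (u Y₀)) - (u Y₂ - φ (u Y₂) / deriv φ (u Y₀))|
        ≤ c * max (pGauge σ (Y₁ - Y₀) ^ (α * γ)) (pGauge σ (Y₂ - Y₀) ^ (α * γ)) *
            pGauge σ (Y₁ - Y₂) ^ α :=
  improved_holder_nonlinear_general N σ α γ K M m H hγ hK hH φ hφ hHol u hbd hm hlow huα Y₀ hY₀
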